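/- arXiv:2410.00598 — 8 statements merged into one kernel-verified Lean document; each statement's English description precedes it below -/
import Mathlib

section
/- Let k ≥ 1 be an integer, let β ≥ 1 and 0 < ε < k be reals with βk > 1, and let F₀ > 0. Then there exists a finite set 𝓡 of k-tuples of positive reals with |𝓡| ≤ (⌈log_{1+ε}(βk)⌉+1)·(⌈log_{1+ε}(k/ε)⌉+1)^{k−1} such that: for every tuple (r₁, …, r_k) of positive reals with r₁ ≥ r₂ ≥ … ≥ r_k, with F₀/β ≤ r₁ ≤ k·F₀, and with r_j ≥ (ε/k)·r₁ for all j, there exists a tuple (r̃₁, …, r̃_k) ∈ 𝓡 satisfying r_j ≤ r̃_j ≤ (1+ε)·r_j for all j ∈ {1, …, k}. -/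
/-!
Round every radius up to a geometric grid of ratio `q = 1 + ε`. The largest radius `r₁` lies in
`[F₀/β, βk · F₀/β]`, so rounding it up to `(F₀/β) q^a` needs `a ≤ ⌈log_q(βk)⌉`. Every other
radius lies in `[(ε/k) r₁, r₁]`, so it can be rounded up to `r̃₁ q^(n-B)` with
`0 ≤ n ≤ B = ⌈log_q(k/ε)⌉`. Rounding up to the least grid point above a value costs at most a
factor `q`.
-/

open Finset

lemma Real.le_pow_natCeil_logb {b x : ℝ} (hb : 1 < b) (hx : 0 < x) :
    x ≤ b ^ ⌈Real.logb b x⌉₊ := by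
  calc x = b ^ Real.logb b x := (Real.rpow_logb (by linarith) hb.ne' hx).symm
    _ ≤ b ^ (⌈Real.logb b x⌉₊ : ℝ) := Real.rpow_le_rpow_of_exponent_le hb.le (Nat.le_ceil _)
    _ = b ^ ⌈Real.logb b x⌉₊ := Real.rpow_natCast b _

lemma exists_le_mul_pow_le_mul {q c x : ℝ} {N : ℕ} (hq : 1 < q) (hc : c ≤ q * x)
    (hN : x ≤ c * q ^ N) : ∃ n ≤ N, x ≤ c * q ^ n ∧ c * q ^ n ≤ q * x := by
  classical
  have hex : ∃ n, x ≤ c * q ^ n := ⟨N, hN⟩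
  refine ⟨Nat.find hex, Nat.find_min' hex hN, Nat.find_spec hex, ?_⟩
  rcases h : Nat.find hex with _ | m
  · simpa using hc
  · have hlt : c * q ^ m < x := not_le.mp (Nat.find_min hex (by omega))
    calc c * q ^ (m + 1) = q * (c * q ^ m) := by ring
      _ ≤ q * x := by gcongr

section RadiusProfiles

variable {k : ℕ}

noncomputable def gridProfile (c q : ℝ) (B : ℕ) (p : ℕ × (Fin k → ℕ)) : Fin k → ℝ :=
  fun j => c * q ^ p.1 / q ^ B * q ^ p.2 j

/-- The exponent at `i₀` is pinned to `B`, so that coordinate is `c * q ^ a`; the others are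
`c * q ^ a * q ^ (n - B)` with `n ≤ B`. -/
def gridIndices (i₀ : Fin k) (A B : ℕ) : Finset (ℕ × (Fin k → ℕ)) :=
  range (A + 1) ×ˢ Fintype.piFinset (Function.update (fun _ => range (B + 1)) i₀ {B})

lemma card_gridIndices (i₀ : Fin k) (A B : ℕ) :
    #(gridIndices i₀ A B) = (A + 1) * (B + 1) ^ (k - 1) := by
  rw [gridIndices, card_product, card_range, Fintype.card_piFinset]
  simp only [Function.update_apply, apply_ite card, card_singleton, card_range, prod_ite,
    prod_const_one, one_mul, prod_const, filter_ne', card_erase_of_mem (mem_univ _), card_univ,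
    Fintype.card_fin]

lemma gridProfile_pos {c q : ℝ} (hc : 0 < c) (hq : 0 < q) (B : ℕ) (p : ℕ × (Fin k → ℕ))
    (j : Fin k) : 0 < gridProfile c q B p j := by
  unfold gridProfile; positivity

lemma exists_gridProfile_near {q c : ℝ} {A B : ℕ} (hq : 1 < q) (i₀ : Fin k)
    (r : Fin k → ℝ) (hr : ∀ j, 0 < r j) (hmax : ∀ j, r j ≤ r i₀)
    (hlow : c ≤ r i₀) (hup : r i₀ ≤ c * q ^ A) (hratio : ∀ j, r i₀ ≤ q ^ B * r j) :
    ∃ p ∈ gridIndices i₀ A B, ∀ j, r j ≤ gridProfile c q B p j ∧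
      gridProfile c q B p j ≤ q * r j := by
  have hq0 : 0 < q := by linarith
  obtain ⟨a, haA, hlead_lo, hlead_hi⟩ :=
    exists_le_mul_pow_le_mul hq (by nlinarith [hr i₀]) hup
  have hcoord : ∀ j, ∃ n ≤ B, r j ≤ c * q ^ a / q ^ B * q ^ n ∧
      c * q ^ a / q ^ B * q ^ n ≤ q * r j := by
    intro j
    refine exists_le_mul_pow_le_mul hq ?_ ?_
    · rw [div_le_iff₀ (by positivity)]
      nlinarith [hratio j]
    · rw [div_mul_cancel₀ _ (by positivity)]
      exact (hmax j).trans hlead_lo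
  choose m hmB hm using hcoord
  refine ⟨(a, Function.update m i₀ B), ?_, fun j => ?_⟩
  · simp only [gridIndices, mem_product, mem_range, Fintype.mem_piFinset]
    refine ⟨by omega, fun j => ?_⟩
    rcases eq_or_ne j i₀ with rfl | hj
    · simp
    · simpa [hj, Nat.lt_succ_iff] using hmB j
  · rcases eq_or_ne j i₀ with rfl | hj
    · simpa [gridProfile, div_mul_cancel₀, hq0.ne'] using And.intro hlead_lo hlead_hi
    · simpa [gridProfile, hj] using hm j

end RadiusProfiles

theorem stmt3_general (k : ℕ) (hk : 0 < k) (β ε F₀ : ℝ) (hβ : 1 ≤ β) (hε : 0 < ε)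
    (hF₀ : 0 < F₀) :
    ∃ 𝓡 : Finset (Fin k → ℝ),
      𝓡.card ≤ (⌈Real.logb (1 + ε) (β * (k : ℝ))⌉₊ + 1) *
          (⌈Real.logb (1 + ε) ((k : ℝ) / ε)⌉₊ + 1) ^ (k - 1) ∧
      (∀ f ∈ 𝓡, ∀ j : Fin k, 0 < f j) ∧
      ∀ r : Fin k → ℝ, (∀ j, 0 < r j) →
        (∀ i j : Fin k, i ≤ j → r j ≤ r i) →
        F₀ / β ≤ r ⟨0, hk⟩ → r ⟨0, hk⟩ ≤ (k : ℝ) * F₀ →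
        (∀ j, ε / (k : ℝ) * r ⟨0, hk⟩ ≤ r j) →
        ∃ f ∈ 𝓡, ∀ j : Fin k, r j ≤ f j ∧ f j ≤ (1 + ε) * r j := by
  have hq : 1 < 1 + ε := by linarith
  have hk0 : (0 : ℝ) < k := by exact_mod_cast hk
  have hβ0 : 0 < β := by linarith
  set A := ⌈Real.logb (1 + ε) (β * (k : ℝ))⌉₊
  set B := ⌈Real.logb (1 + ε) ((k : ℝ) / ε)⌉₊
  have hA : β * k ≤ (1 + ε) ^ A := Real.le_pow_natCeil_logb hq (by positivity)
  have hB : k / ε ≤ (1 + ε) ^ B := Real.le_pow_natCeil_logb hq (by positivity)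
  set i₀ : Fin k := ⟨0, hk⟩
  refine ⟨(gridIndices i₀ A B).image (gridProfile (F₀ / β) (1 + ε) B),
    card_image_le.trans (card_gridIndices i₀ A B).le, ?_, ?_⟩
  · simp only [mem_image]
    rintro _ ⟨p, -, rfl⟩ j
    exact gridProfile_pos (by positivity) (by linarith) B p j
  · intro r hr hanti hlow hup hratio
    have hlead : r i₀ ≤ F₀ / β * (1 + ε) ^ A :=
      calc r i₀ ≤ k * F₀ := hup
        _ = F₀ / β * (β * k) := by field_simp
        _ ≤ F₀ / β * (1 + ε) ^ A := by gcongr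
    have hspread : ∀ j, r i₀ ≤ (1 + ε) ^ B * r j := fun j =>
      calc r i₀ = k / ε * (ε / k * r i₀) := by field_simp
        _ ≤ (1 + ε) ^ B * r j :=
          mul_le_mul hB (hratio j) (mul_nonneg (by positivity) (hr i₀).le) (by positivity)
    obtain ⟨p, hp, hnear⟩ := exists_gridProfile_near hq i₀ r hr
      (fun j => hanti i₀ j (Nat.zero_le _)) hlow hlead hspread
    exact ⟨_, mem_image_of_mem _ hp, hnear⟩

/-- existence of a small set `𝓡` of candidate radius profiles (tuples of
positive reals) of cardinality at most
`(⌈log_{1+ε}(βk)⌉+1)·(⌈log_{1+ε}(k/ε)⌉+1)^{k−1}` such that every decreasingly sorted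
tuple of positive radii with `F₀/β ≤ r₁ ≤ k·F₀` and `r_j ≥ (ε/k)·r₁` for all `j`
admits a near-optimal radius profile in `𝓡`, i.e. a member `f` with
`r_j ≤ f_j ≤ (1+ε)·r_j` for every coordinate `j`. -/
theorem stmt3 (k : ℕ) (hk : 0 < k) (β ε F₀ : ℝ) (hβ : 1 ≤ β) (hε : 0 < ε)
    (hεk : ε < (k : ℝ)) (hβk : 1 < β * (k : ℝ)) (hF₀ : 0 < F₀) :
    ∃ 𝓡 : Finset (Fin k → ℝ),
      𝓡.card ≤ (⌈Real.logb (1 + ε) (β * (k : ℝ))⌉₊ + 1) *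
          (⌈Real.logb (1 + ε) ((k : ℝ) / ε)⌉₊ + 1) ^ (k - 1) ∧
      (∀ f ∈ 𝓡, ∀ j : Fin k, 0 < f j) ∧
      ∀ r : Fin k → ℝ, (∀ j, 0 < r j) →
        (∀ i j : Fin k, i ≤ j → r j ≤ r i) →
        F₀ / β ≤ r ⟨0, hk⟩ → r ⟨0, hk⟩ ≤ (k : ℝ) * F₀ →
        (∀ j, ε / (k : ℝ) * r ⟨0, hk⟩ ≤ r j) →
        ∃ f ∈ 𝓡, ∀ j : Fin k, r j ≤ f j ∧ f j ≤ (1 + ε) * r j :=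
  stmt3_general k hk β ε F₀ hβ hε hF₀
end

section
/- Let (P,d) be a finite metric space, let 0 ≤ ℓ ≤ k be integers, let c₁, …, c_ℓ ∈ P be distinct points with radii r₁, …, r_ℓ ≥ 0, and let d′ be the associated completion distance. Suppose points c_{ℓ+1}, …, c_k ∈ P are chosen by farthest-first traversal with respect to d′, i.e., for each j ∈ {ℓ+1, …, k}, the point c_j maximizes min_{i < j} d′(p, c_i) over all p ∈ P. Let D = max_{p ∈ P} min_{1 ≤ j ≤ k} d′(p, c_j). Then for every choice of points c′_{ℓ+1}, …, c′_k ∈ P we have max_{x ∈ P} min_{c ∈ {c₁,…,c_ℓ, c′_{ℓ+1},…,c′_k}} d′(x, c) ≥ D/2. In other words, the farthest-first completion is a 2-approximation for the k-center completion problem. -/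
open Classical in

/-- The completion distance `d′` associated to predefined centers `c₁, …, c_ℓ`
with radii `r₁, …, r_ℓ`: distances to a predefined center `cᵢ` are reduced by `rᵢ`
(and truncated at `0`), distances between two predefined centers are reduced by
both radii, and all other distances are unchanged. -/
noncomputable def completionDist {P : Type*} [MetricSpace P] {ℓ : ℕ}
    (c : Fin ℓ → P) (r : Fin ℓ → ℝ) (x y : P) : ℝ :=
  if hx : ∃ i, c i = x then
    if hy : ∃ j, c j = y then max (dist x y - r hx.choose - r hy.choose) 0
    else max (dist x y - r hx.choose) 0
  else
    if hy : ∃ j, c j = y then max (dist x y - r hy.choose) 0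
    else dist x y

lemma completionDist_nonneg {P : Type*} [MetricSpace P] {ℓ : ℕ}
    (c : Fin ℓ → P) (r : Fin ℓ → ℝ) (x y : P) : 0 ≤ completionDist c r x y := by
  unfold completionDist
  split_ifs <;> first | exact le_max_right _ _ | exact dist_nonneg

lemma completionDist_self_eq_zero {P : Type*} [MetricSpace P] {ℓ : ℕ}
    (c : Fin ℓ → P) (r : Fin ℓ → ℝ) (hr : ∀ i, 0 ≤ r i) (x : P)
    (hx : ∃ i, c i = x) : completionDist c r x x = 0 := by
  unfold completionDist
  rw [dif_pos hx, dif_pos hx, dist_self]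
  exact max_eq_right (by have := hr hx.choose; linarith)

lemma completionDist_eq_dist {P : Type*} [MetricSpace P] {ℓ : ℕ}
    (c : Fin ℓ → P) (r : Fin ℓ → ℝ) (x y : P)
    (hx : ¬∃ i, c i = x) (hy : ¬∃ i, c i = y) :
    completionDist c r x y = dist x y := by
  unfold completionDist
  rw [dif_neg hx, dif_neg hy]

/-- farthest-first traversal is a 2-approximation for the `k`-center
completion problem.  Given `ℓ ≤ k` predefined distinct centers `c₀, …, c_{ℓ-1}` with
nonnegative radii and the associated completion distance `d′`, if the remaining centers
`c_ℓ, …, c_{k-1}` are chosen by farthest-first traversal w.r.t. `d′` (each new center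
maximizing the minimum `d′`-distance to the previously chosen centers), and `D` is the
resulting maximum `d′`-distance of a point to its nearest center, then every completion
`c′` of the predefined centers has cost at least `D/2`. -/
theorem stmt4 {P : Type*} [Fintype P] [MetricSpace P] [Nonempty P]
    (k ℓ : ℕ) (hk : 0 < k) (hℓk : ℓ ≤ k)
    (c : Fin k → P) (r : Fin ℓ → ℝ) (hr : ∀ i, 0 ≤ r i)
    (hdistinct : Function.Injective fun i : Fin ℓ => c (Fin.castLE hℓk i))
    (d' : P → P → ℝ)
    (hd' : d' = completionDist (fun i : Fin ℓ => c (Fin.castLE hℓk i)) r)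
    (hFFT : ∀ j : Fin k, ℓ ≤ (j : ℕ) → 0 < (j : ℕ) → ∀ p : P,
      sInf {x | ∃ i : Fin k, i < j ∧ x = d' p (c i)} ≤
        sInf {x | ∃ i : Fin k, i < j ∧ x = d' (c j) (c i)})
    (D : ℝ)
    (hD : D = sSup {x | ∃ p : P, x = sInf {y | ∃ i : Fin k, y = d' p (c i)}}) :
    ∀ c' : Fin k → P, (∀ i : Fin k, (i : ℕ) < ℓ → c' i = c i) →
      D / 2 ≤ sSup {x | ∃ p : P, x = sInf {y | ∃ i : Fin k, y = d' p (c' i)}} := by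
  intro c' hc'
  have hd'nonneg : ∀ x y : P, 0 ≤ d' x y := by
    intro x y; rw [hd']; exact completionDist_nonneg _ _ _ _
  have i0 : Fin k := ⟨0, hk⟩
  -- the cost of the solution c' is nonnegative
  set cost := sSup {x | ∃ p : P, x = sInf {y | ∃ i : Fin k, y = d' p (c' i)}} with hcost
  have hcostfin : {x | ∃ p : P, x = sInf {y | ∃ i : Fin k, y = d' p (c' i)}}.Finite :=
    (Set.finite_range (fun p : P => sInf {y | ∃ i : Fin k, y = d' p (c' i)})).subset
      (by rintro x ⟨p, rfl⟩; exact ⟨p, rfl⟩)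
  have hinf_le : ∀ p : P, sInf {y | ∃ i : Fin k, y = d' p (c' i)} ≤ cost := by
    intro p
    exact le_csSup hcostfin.bddAbove ⟨p, rfl⟩
  have hcost0 : 0 ≤ cost := by
    obtain ⟨p⟩ := (inferInstance : Nonempty P)
    have h1 : (0:ℝ) ≤ sInf {y | ∃ i : Fin k, y = d' p (c' i)} :=
      le_csInf ⟨_, i0, rfl⟩ (by rintro y ⟨i, rfl⟩; exact hd'nonneg _ _)
    exact h1.trans (hinf_le p)
  by_cases hD0 : D ≤ 0
  · linarith
  push_neg at hD0
  -- witness p0 attaining D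
  have hDfin : {x | ∃ p : P, x = sInf {y | ∃ i : Fin k, y = d' p (c i)}}.Finite :=
    (Set.finite_range (fun p : P => sInf {y | ∃ i : Fin k, y = d' p (c i)})).subset
      (by rintro x ⟨p, rfl⟩; exact ⟨p, rfl⟩)
  obtain ⟨p0, hp0⟩ : ∃ p0 : P, D = sInf {y | ∃ i : Fin k, y = d' p0 (c i)} := by
    rw [hD]
    obtain ⟨q⟩ := (inferInstance : Nonempty P)
    have hne : {x | ∃ p : P, x = sInf {y | ∃ i : Fin k, y = d' p (c i)}}.Nonempty :=
      ⟨_, q, rfl⟩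
    exact hne.csSup_mem hDfin
  have hp0_all : ∀ i : Fin k, D ≤ d' p0 (c i) := by
    intro i
    rw [hp0]
    exact csInf_le ((Set.finite_range (fun i : Fin k => d' p0 (c i))).subset
      (by rintro x ⟨i, rfl⟩; exact ⟨i, rfl⟩)).bddBelow ⟨i, rfl⟩
  -- key FFT property: later centers are far from earlier ones
  have hK : ∀ j : Fin k, ℓ ≤ (j : ℕ) → ∀ i : Fin k, i < j → D ≤ d' (c j) (c i) := by
    intro j hℓj i hij
    have h0j : 0 < (j : ℕ) := Nat.lt_of_le_of_lt (Nat.zero_le _) hij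
    have h1 : D ≤ sInf {x | ∃ i' : Fin k, i' < j ∧ x = d' p0 (c i')} :=
      le_csInf ⟨_, i, hij, rfl⟩ (by rintro x ⟨i', _, rfl⟩; exact hp0_all i')
    have h2 : sInf {x | ∃ i' : Fin k, i' < j ∧ x = d' (c j) (c i')} ≤ d' (c j) (c i) :=
      csInf_le ((Set.finite_range (fun i' : Fin k => d' (c j) (c i'))).subset
        (by rintro x ⟨i', _, rfl⟩; exact ⟨i', rfl⟩)).bddBelow ⟨i, hij, rfl⟩
    exact h1.trans ((hFFT j hℓj h0j p0).trans h2)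
  -- the set S of FFT centers together with p0
  set n := k - ℓ with hn
  have hkn : ℓ + n = k := by omega
  set s : Fin (n+1) → P := fun t => if h : (t : ℕ) < n then c ⟨ℓ + t, by omega⟩ else p0
    with hs
  have hK2 : ∀ t : Fin (n+1), ∀ i : Fin k, (i : ℕ) < ℓ + (t : ℕ) → D ≤ d' (s t) (c i) := by
    intro t i hi
    by_cases h : (t : ℕ) < n
    · have : s t = c ⟨ℓ + t, by omega⟩ := by simp [hs, h]
      rw [this]
      exact hK ⟨ℓ + t, by omega⟩ (Nat.le_add_right _ _) i (by simpa [Fin.lt_def] using hi)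
    · have : s t = p0 := by simp [hs, h]
      rw [this]; exact hp0_all i
  -- no element of S coincides with a predefined center
  have hsnc : ∀ t : Fin (n+1), ¬∃ i : Fin ℓ, c (Fin.castLE hℓk i) = s t := by
    rintro t ⟨i, hi⟩
    have h1 : D ≤ d' (s t) (c (Fin.castLE hℓk i)) :=
      hK2 t (Fin.castLE hℓk i)
        (by have h1 : (i : ℕ) < ℓ := i.2
            have h2 : ((Fin.castLE hℓk i : Fin k) : ℕ) = (i : ℕ) := rfl
            omega)
    rw [hi] at h1
    have h2 : d' (s t) (s t) = 0 := by
      rw [hd']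
      exact completionDist_self_eq_zero _ _ hr _ ⟨i, hi⟩
    linarith
  -- suppose for contradiction that the cost is < D/2
  by_contra hM
  push_neg at hM
  -- for each t, choose a center of c' serving s t within distance < D/2
  have hm : ∀ t : Fin (n+1), ∃ m : Fin k, d' (s t) (c' m) < D / 2 ∧ ℓ ≤ (m : ℕ) := by
    intro t
    have hfin : {y | ∃ i : Fin k, y = d' (s t) (c' i)}.Finite :=
      (Set.finite_range (fun i : Fin k => d' (s t) (c' i))).subset
        (by rintro x ⟨i, rfl⟩; exact ⟨i, rfl⟩)
    have hne : {y | ∃ i : Fin k, y = d' (s t) (c' i)}.Nonempty := ⟨_, i0, rfl⟩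
    obtain ⟨m, hmem⟩ : sInf {y | ∃ i : Fin k, y = d' (s t) (c' i)} ∈
        {y | ∃ i : Fin k, y = d' (s t) (c' i)} :=
      hne.csInf_mem hfin
    have hlt : d' (s t) (c' m) < D / 2 := by
      rw [← hmem]; exact lt_of_le_of_lt (hinf_le (s t)) hM
    refine ⟨m, hlt, ?_⟩
    by_contra hmℓ
    push_neg at hmℓ
    have := hK2 t m (by omega)
    rw [hc' m hmℓ] at hlt
    linarith
  choose m hm1 hm2 using hm
  -- pigeonhole: two elements of S share a center
  have key : ∀ a b : Fin (n+1), a < b → m a = m b → False := by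
    intro a b hab hmab
    set q := c' (m b) with hq
    have hq1 : d' (s a) q < D / 2 := by rw [hq, ← hmab]; exact hm1 a
    have hq2 : d' (s b) q < D / 2 := hm1 b
    have hqnc : ¬∃ i : Fin ℓ, c (Fin.castLE hℓk i) = q := by
      rintro ⟨i, hi⟩
      have h1 : D ≤ d' (s b) (c (Fin.castLE hℓk i)) :=
        hK2 b (Fin.castLE hℓk i)
          (by have h1 : (i : ℕ) < ℓ := i.2
              have h2 : ((Fin.castLE hℓk i : Fin k) : ℕ) = (i : ℕ) := rfl
              omega)
      rw [hi] at h1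
      linarith
    have e1 : d' (s b) (s a) = dist (s b) (s a) := by
      rw [hd']; exact completionDist_eq_dist _ _ _ _ (hsnc b) (hsnc a)
    have e2 : d' (s a) q = dist (s a) q := by
      rw [hd']; exact completionDist_eq_dist _ _ _ _ (hsnc a) hqnc
    have e3 : d' (s b) q = dist (s b) q := by
      rw [hd']; exact completionDist_eq_dist _ _ _ _ (hsnc b) hqnc
    have ha_lt : (a : ℕ) < n := by
      have hb : (b : ℕ) < n + 1 := b.2
      have : (a : ℕ) < (b : ℕ) := hab
      omega
    have hsa : s a = c ⟨ℓ + a, by omega⟩ := by simp [hs, ha_lt]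
    have hDle : D ≤ d' (s b) (s a) := by
      rw [hsa]
      exact hK2 b ⟨ℓ + a, by omega⟩ (by simpa using hab)
    rw [e1] at hDle
    rw [e2] at hq1
    rw [e3] at hq2
    have htri : dist (s b) (s a) ≤ dist (s b) q + dist (s a) q := by
      rw [dist_comm (s a) q]
      exact dist_triangle _ _ _
    linarith
  -- construct the pigeonhole map
  have hmn : ∀ t : Fin (n+1), (m t : ℕ) - ℓ < n := by
    intro t
    have h1 : (m t : ℕ) < k := (m t).2
    have h2 := hm2 t
    omega
  obtain ⟨a, b, hab, hfab⟩ := Fintype.exists_ne_map_eq_of_card_lt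
    (fun t : Fin (n+1) => (⟨(m t : ℕ) - ℓ, hmn t⟩ : Fin n))
    (by simp)
  have hmab : m a = m b := by
    have h1 : (m a : ℕ) - ℓ = (m b : ℕ) - ℓ := congrArg Fin.val hfab
    have h2 := hm2 a
    have h3 := hm2 b
    exact Fin.ext (by omega)
  rcases hab.lt_or_gt with h | h
  · exact key a b h hmab
  · exact key b a h hmab.symm
end

section
/- Let (P,d) be a finite metric space and let C₁, …, C_k be a partition of P into nonempty clusters with centers c_j ∈ C_j and radii r_j = max_{p ∈ C_j} d(p, c_j), sorted decreasingly r₁ ≥ r₂ ≥ … ≥ r_k. Let 0 ≤ i < k, let ĉ₁, …, ĉ_i ∈ P be distinct points with radii r̂₁, …, r̂_i ≥ 0, and let d′ be the associated completion distance. Assume that for every point p ∈ C₁ ∪ … ∪ C_i there exists ℓ ≤ i with d(p, ĉ_ℓ) ≤ r̂_ℓ. Then max_{x ∈ P} min_{c ∈ {ĉ₁,…,ĉ_i, c_{i+1},…,c_k}} d′(x, c) ≤ r_{i+1}; in particular, the optimum value of the k-center completion problem with predefined centers ĉ₁, …, ĉ_i and radii r̂₁, …, r̂_i is at most r_{i+1}.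 -/
/-- Let `C₁, …, C_k` (here: the fibers of `σ : P → Fin k`) be a partition
of a finite metric space into nonempty clusters with centers `c j ∈ C j` and radii
`r j = max_{p ∈ C j} d(p, c j)`, sorted decreasingly.  Let `cHat₁, …, cHat_i` (`i < k`) be
distinct predefined centers with nonnegative radii `rHat`, let `d′` be the associated
completion distance, and assume every point of the first `i` clusters lies in one of the
balls `B(cHat_ℓ, rHat_ℓ)`.  Then extending the predefined centers by the optimal centers
`c_{i+1}, …, c_k` yields a solution of the `k`-center completion problem of value at
most `r_{i+1}`; in particular the optimum of the completion problem is at most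
`r_{i+1}`. -/
theorem stmt5 {P : Type*} [Fintype P] [MetricSpace P]
    (k : ℕ) (σ : P → Fin k) (c : Fin k → P)
    (hcenter : ∀ j : Fin k, σ (c j) = j)
    (r : Fin k → ℝ)
    (hr : ∀ j : Fin k, r j = sSup {x | ∃ p : P, σ p = j ∧ x = dist p (c j)})
    (hsorted : ∀ a b : Fin k, a ≤ b → r b ≤ r a)
    (i : ℕ) (hik : i < k)
    (cHat : Fin i → P) (hdistinct : Function.Injective cHat)
    (rHat : Fin i → ℝ) (hrHat : ∀ ℓ, 0 ≤ rHat ℓ)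
    (hcov : ∀ p : P, (σ p : ℕ) < i → ∃ ℓ : Fin i, dist p (cHat ℓ) ≤ rHat ℓ) :
    ∀ x : P,
      sInf {y | ∃ j : Fin k,
          y = completionDist cHat rHat x (if h : (j : ℕ) < i then cHat ⟨j, h⟩ else c j)} ≤
        r ⟨i, hik⟩ := by
  intro x
  -- basic facts
  have hbddA : ∀ j : Fin k, BddAbove {x | ∃ p : P, σ p = j ∧ x = dist p (c j)} := by
    intro j
    apply Set.Finite.bddAbove
    have : {x | ∃ p : P, σ p = j ∧ x = dist p (c j)} ⊆
        (fun p : P => dist p (c j)) '' Set.univ := by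
      rintro y ⟨p, _, rfl⟩; exact ⟨p, trivial, rfl⟩
    exact (Set.finite_univ.image _).subset this
  have hrnn : ∀ j : Fin k, 0 ≤ r j := by
    intro j
    rw [hr j]
    exact le_csSup (hbddA j) ⟨c j, hcenter j, by simp⟩
  have hdist_le : ∀ p : P, dist p (c (σ p)) ≤ r (σ p) := by
    intro p
    rw [hr (σ p)]
    exact le_csSup (hbddA (σ p)) ⟨p, rfl, rfl⟩
  have hbddB : BddBelow {y | ∃ j : Fin k,
      y = completionDist cHat rHat x (if h : (j : ℕ) < i then cHat ⟨j, h⟩ else c j)} := by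
    apply Set.Finite.bddBelow
    have : {y | ∃ j : Fin k,
        y = completionDist cHat rHat x (if h : (j : ℕ) < i then cHat ⟨j, h⟩ else c j)} ⊆
        (fun j : Fin k => completionDist cHat rHat x
          (if h : (j : ℕ) < i then cHat ⟨j, h⟩ else c j)) '' Set.univ := by
      rintro y ⟨j, rfl⟩; exact ⟨j, trivial, rfl⟩
    exact (Set.finite_univ.image _).subset this
  by_cases hx : (σ x : ℕ) < i
  · obtain ⟨ℓ, hℓ⟩ := hcov x hx
    have hjlt : ((⟨(ℓ : ℕ), lt_trans ℓ.2 hik⟩ : Fin k) : ℕ) < i := ℓ.2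
    have hmem : completionDist cHat rHat x (cHat ℓ) ∈ {y | ∃ j : Fin k,
        y = completionDist cHat rHat x (if h : (j : ℕ) < i then cHat ⟨j, h⟩ else c j)} := by
      refine ⟨⟨(ℓ : ℕ), lt_trans ℓ.2 hik⟩, ?_⟩
      rw [dif_pos hjlt]
    have hle : completionDist cHat rHat x (cHat ℓ) ≤ 0 := by
      have hy : ∃ j, cHat j = cHat ℓ := ⟨ℓ, rfl⟩
      have hyc : rHat hy.choose = rHat ℓ := by
        have := hy.choose_spec
        rw [hdistinct this]
      unfold completionDist
      split_ifs with h1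
      · have := hrHat h1.choose
        rw [hyc]
        exact max_le (by linarith) le_rfl
      · rw [hyc]
        exact max_le (by linarith) le_rfl
    exact le_trans (csInf_le hbddB hmem) (le_trans hle (hrnn _))
  · have hjnlt : ¬ ((σ x : ℕ) < i) := hx
    have hmem : completionDist cHat rHat x (c (σ x)) ∈ {y | ∃ j : Fin k,
        y = completionDist cHat rHat x (if h : (j : ℕ) < i then cHat ⟨j, h⟩ else c j)} := by
      refine ⟨σ x, ?_⟩
      rw [dif_neg hjnlt]
    have hle : completionDist cHat rHat x (c (σ x)) ≤ dist x (c (σ x)) := by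
      have hd : (0:ℝ) ≤ dist x (c (σ x)) := dist_nonneg
      unfold completionDist
      split_ifs with h1 h2 h3
      · have a1 := hrHat h1.choose; have a2 := hrHat h2.choose
        exact max_le (by linarith) hd
      · have a1 := hrHat h1.choose
        exact max_le (by linarith) hd
      · have a1 := hrHat h3.choose
        exact max_le (by linarith) hd
      · exact le_rfl
    have hsx : (⟨i, hik⟩ : Fin k) ≤ σ x := by
      simp only [Fin.le_def]
      omega
    calc sInf _ ≤ completionDist cHat rHat x (c (σ x)) := csInf_le hbddB hmem
      _ ≤ dist x (c (σ x)) := hle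
      _ ≤ r (σ x) := hdist_le x
      _ ≤ r ⟨i, hik⟩ := hsorted _ _ hsx
end

section
/- Let (P,d) be a finite metric space, let ĉ₁, …, ĉ_k ∈ P be points with radii r̂₁, …, r̂_k ≥ 0, and let G be the associated access graph on vertex set P. Let Q be a mergeable constraint, i.e., a predicate on nonempty subsets of P such that whenever A and B are disjoint nonempty subsets with Q(A) and Q(B), also Q(A ∪ B) holds. Let C₁, …, C_m be a partition of P into nonempty parts such that Q(C_j) holds for every j ≤ m and such that for every j ≤ m there exists ℓ ≤ k with C_j ⊆ B(ĉ_ℓ, r̂_ℓ). Then for every connected component Z of G, the vertex set of Z satisfies Q. -/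
/-- The access graph on a metric space `P` associated to centers `c₁, …, c_k` with radii
`r₁, …, r_k`: distinct vertices `x` and `y` are adjacent iff there is an `i ≤ k` with
`cᵢ ∈ {x, y}` and `d(x, y) ≤ rᵢ`. -/
def accessGraph {P : Type*} [MetricSpace P] {k : ℕ} (c : Fin k → P) (r : Fin k → ℝ) :
    SimpleGraph P :=
  SimpleGraph.fromRel fun x y => ∃ i, c i = x ∧ dist x y ≤ r i

/-- let `Q` be a mergeable constraint (a predicate on nonempty subsets that
is preserved by unions of disjoint sets).  If `C₁, …, C_m` is a partition of a finite
metric space `P` into nonempty parts each satisfying `Q` and each contained in one of the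
balls `B(cHat ℓ, rHat ℓ)`, then the vertex set of every connected component of the access
graph satisfies `Q`. -/
theorem stmt7 {P : Type*} [Fintype P] [MetricSpace P] (k m : ℕ)
    (cHat : Fin k → P) (rHat : Fin k → ℝ) (hrHat : ∀ i, 0 ≤ rHat i)
    (Q : Set P → Prop)
    (hmerge : ∀ A B : Set P, A.Nonempty → B.Nonempty → Disjoint A B →
      Q A → Q B → Q (A ∪ B))
    (C : Fin m → Set P) (hne : ∀ j, (C j).Nonempty)
    (hdisj : ∀ j j' : Fin m, j ≠ j' → Disjoint (C j) (C j'))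
    (hcover : ⋃ j, C j = Set.univ)
    (hQ : ∀ j, Q (C j))
    (hball : ∀ j, ∃ i, C j ⊆ Metric.closedBall (cHat i) (rHat i)) :
    ∀ Z : (accessGraph cHat rHat).ConnectedComponent, Q Z.supp := by
  classical
  intro Z
  -- points in a common ball are reachable
  have hreach : ∀ (i : Fin k) (x y : P), x ∈ Metric.closedBall (cHat i) (rHat i) →
      y ∈ Metric.closedBall (cHat i) (rHat i) → (accessGraph cHat rHat).Reachable x y := by
    intro i x y hx hy
    have step : ∀ z : P, z ∈ Metric.closedBall (cHat i) (rHat i) →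
        (accessGraph cHat rHat).Reachable (cHat i) z := by
      intro z hz
      by_cases hzc : cHat i = z
      · exact hzc ▸ SimpleGraph.Reachable.refl _
      · refine SimpleGraph.Adj.reachable ?_
        refine ⟨hzc, Or.inl ⟨i, rfl, ?_⟩⟩
        simpa [Metric.mem_closedBall, dist_comm] using hz
    exact (step x hx).symm.trans (step y hy)
  -- each part touching the component lies inside it
  have hpart : ∀ j : Fin m, ∀ x ∈ C j, x ∈ Z.supp → C j ⊆ Z.supp := by
    intro j x hxj hxZ y hyj
    obtain ⟨i, hi⟩ := hball j
    have hr : (accessGraph cHat rHat).Reachable y x := hreach i y x (hi hyj) (hi hxj)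
    have : (accessGraph cHat rHat).connectedComponentMk y
        = (accessGraph cHat rHat).connectedComponentMk x :=
      SimpleGraph.ConnectedComponent.sound hr
    simpa [SimpleGraph.ConnectedComponent.mem_supp_iff, this] using hxZ
  -- the index set of parts inside Z
  set S : Finset (Fin m) := Finset.univ.filter (fun j => C j ⊆ Z.supp) with hS
  have hsupp : Z.supp = ⋃ j ∈ S, C j := by
    apply Set.Subset.antisymm
    · intro x hx
      have hxU : x ∈ ⋃ j, C j := by rw [hcover]; trivial
      obtain ⟨j, hj⟩ := Set.mem_iUnion.mp hxU
      have hsub : C j ⊆ Z.supp := hpart j x hj hx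
      exact Set.mem_biUnion (Finset.mem_filter.mpr ⟨Finset.mem_univ j, hsub⟩) hj
    · intro x hx
      obtain ⟨j, hj, hxj⟩ := Set.mem_iUnion₂.mp hx
      have : C j ⊆ Z.supp := (Finset.mem_filter.mp hj).2
      exact this hxj
  -- S is nonempty
  obtain ⟨v⟩ := Z
  have hvZ : v ∈ ((accessGraph cHat rHat).connectedComponentMk v).supp := by
    simp [SimpleGraph.ConnectedComponent.mem_supp_iff]
  have hvU : v ∈ ⋃ j ∈ S, C j := hsupp ▸ hvZ
  obtain ⟨j₀, hj₀S, _⟩ := Set.mem_iUnion₂.mp hvU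
  -- Q of a nonempty finite union of parts
  have key : ∀ s : Finset (Fin m), s.Nonempty → Q (⋃ j ∈ s, C j) := by
    intro s hsne
    induction s using Finset.cons_induction with
    | empty => exact absurd hsne (by simp)
    | cons a s ha ih =>
      rcases s.eq_empty_or_nonempty with hs | hs
      · subst hs
        simpa using hQ a
      · have hu : (⋃ j ∈ Finset.cons a s ha, C j) = C a ∪ ⋃ j ∈ s, C j := by
          simp [Set.iUnion_or, Set.iUnion_union_distrib]
        rw [hu]
        refine hmerge _ _ (hne a) ?_ ?_ (hQ a) (ih hs)
        · obtain ⟨b, hb⟩ := hs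
          obtain ⟨x, hx⟩ := hne b
          exact ⟨x, Set.mem_biUnion hb hx⟩
        · rw [Set.disjoint_iUnion₂_right]
          intro j hj
          exact hdisj a j (fun h => ha (h ▸ hj))
  rw [hsupp]
  exact key S ⟨j₀, hj₀S⟩
end

section
/- Let (P,d) be a finite metric space, let ĉ₁, …, ĉ_k ∈ P be points with radii r̂₁, …, r̂_k ≥ 0 such that every point of P lies in some ball B(ĉ_i, r̂_i), and let G be the associated access graph on vertex set P. Let Z be (the vertex set of) a connected component of G, let I_Z = {i ≤ k : ĉ_i ∈ Z} (which is nonempty), and let ĉ be a center ĉ_i with i ∈ I_Z whose radius r̂_i is maximal among {r̂_i : i ∈ I_Z}. Then for every vertex v ∈ Z, d(ĉ, v) ≤ (Σ_{i ∈ I_Z} 2·r̂_i) − max_{i ∈ I_Z} r̂_i. -/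
/-- suppose every point of the finite metric space `P` lies in one of the
balls `B(cHat i, rHat i)`, let `Z` be a connected component of the access graph, let
`IZ = {i : cHat i ∈ Z}` and let `i₀ ∈ IZ` have maximal radius.  Then `IZ` is nonempty
and every vertex `v ∈ Z` satisfies
`d(cHat i₀, v) ≤ (∑_{i ∈ IZ} 2·rHat i) − max_{i ∈ IZ} rHat i`
(the maximum being `rHat i₀`). -/
theorem stmt8 {P : Type*} [Fintype P] [MetricSpace P] (k : ℕ)
    (cHat : Fin k → P) (rHat : Fin k → ℝ) (hrHat : ∀ i, 0 ≤ rHat i)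
    (hcov : ∀ p : P, ∃ i, dist p (cHat i) ≤ rHat i)
    (Z : (accessGraph cHat rHat).ConnectedComponent)
    (IZ : Finset (Fin k)) (hIZ : ∀ i, i ∈ IZ ↔ cHat i ∈ Z.supp)
    (i₀ : Fin k) (hi₀ : i₀ ∈ IZ) (hmax : ∀ i ∈ IZ, rHat i ≤ rHat i₀) :
    IZ.Nonempty ∧
      ∀ v ∈ Z.supp, dist (cHat i₀) v ≤ (∑ i ∈ IZ, 2 * rHat i) - rHat i₀ := by
  classical
  refine ⟨⟨i₀, hi₀⟩, ?_⟩
  intro v hv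
  set H : SimpleGraph (Fin k) := SimpleGraph.fromRel
    (fun i j => i ∈ IZ ∧ j ∈ IZ ∧ dist (cHat i) (cHat j) ≤ rHat i + rHat j) with hH
  have hHmem : ∀ {i j}, H.Adj i j → i ∈ IZ ∧ j ∈ IZ := by
    rintro i j ⟨hne, h | h⟩
    · exact ⟨h.1, h.2.1⟩
    · exact ⟨h.2.1, h.1⟩
  have hHdist : ∀ {i j}, H.Adj i j → dist (cHat i) (cHat j) ≤ rHat i + rHat j := by
    rintro i j ⟨hne, h | h⟩
    · exact h.2.2
    · rw [dist_comm]; linarith [h.2.2]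
  have hHreach : ∀ {i j}, i ∈ IZ → j ∈ IZ → dist (cHat i) (cHat j) ≤ rHat i + rHat j →
      H.Reachable i j := by
    intro i j hi hj hd
    by_cases hij : i = j
    · exact hij ▸ SimpleGraph.Reachable.refl i
    · exact SimpleGraph.Adj.reachable ⟨hij, Or.inl ⟨hi, hj, hd⟩⟩
  -- the covering index of a point
  set g : P → Fin k := fun x => (hcov x).choose with hg
  have hgd : ∀ x : P, dist x (cHat (g x)) ≤ rHat (g x) := fun x => (hcov x).choose_spec
  -- if x ∈ Z.supp then its covering center lies in Z, so g x ∈ IZ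
  have hgZ : ∀ x : P, x ∈ Z.supp → g x ∈ IZ := by
    intro x hx
    rw [hIZ]
    by_cases hxc : cHat (g x) = x
    · rwa [hxc]
    · have hadj : (accessGraph cHat rHat).Adj x (cHat (g x)) := by
        refine ⟨fun h => hxc h.symm, Or.inr ⟨g x, rfl, ?_⟩⟩
        rw [dist_comm]; exact hgd x
      rw [SimpleGraph.ConnectedComponent.mem_supp_iff] at hx ⊢
      rw [← hx]
      exact SimpleGraph.ConnectedComponent.sound hadj.symm.reachable
  -- walks in G transfer to reachability between covering indices in H
  have key : ∀ {x y : P}, (accessGraph cHat rHat).Walk x y → x ∈ Z.supp →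
      H.Reachable (g x) (g y) := by
    intro x y w
    induction w with
    | nil => intro _; exact SimpleGraph.Reachable.refl _
    | @cons x b y h q ih =>
      intro hx
      have hb : b ∈ Z.supp := by
        rw [SimpleGraph.ConnectedComponent.mem_supp_iff] at hx ⊢
        rw [← hx]
        exact SimpleGraph.ConnectedComponent.sound h.symm.reachable
      refine SimpleGraph.Reachable.trans ?_ (ih hb)
      obtain ⟨hne, hl⟩ := h
      have hgx : g x ∈ IZ := hgZ x hx
      have hgb : g b ∈ IZ := hgZ b hb
      rcases hl with ⟨l, hcl, hd⟩ | ⟨l, hcl, hd⟩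
      · -- cHat l = x, dist x b ≤ rHat l
        have hlZ : l ∈ IZ := by rw [hIZ, hcl]; exact hx
        have h1 : H.Reachable (g x) l := by
          refine hHreach hgx hlZ ?_
          rw [hcl, dist_comm]
          have := hgd x
          have := hrHat l
          linarith
        have h2 : H.Reachable l (g b) := by
          refine hHreach hlZ hgb ?_
          rw [hcl]
          calc dist x (cHat (g b)) ≤ dist x b + dist b (cHat (g b)) := dist_triangle _ _ _
            _ ≤ rHat l + rHat (g b) := add_le_add hd (hgd b)
        exact h1.trans h2
      · -- cHat l = b, dist b x ≤ rHat l
        have hlZ : l ∈ IZ := by rw [hIZ, hcl]; exact hb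
        have h1 : H.Reachable (g x) l := by
          refine hHreach hgx hlZ ?_
          rw [hcl]
          calc dist (cHat (g x)) b ≤ dist (cHat (g x)) x + dist x b := dist_triangle _ _ _
            _ ≤ rHat (g x) + rHat l := by
                rw [dist_comm (cHat (g x)) x, dist_comm x b]
                exact add_le_add (hgd x) hd
        have h2 : H.Reachable l (g b) := by
          refine hHreach hlZ hgb ?_
          rw [hcl]
          have := hgd b
          have := hrHat l
          linarith
        exact h1.trans h2
  -- support of an H-walk starting in IZ is contained in IZ
  have hsupp : ∀ {i j : Fin k} (p : H.Walk i j), i ∈ IZ → ∀ l ∈ p.support, l ∈ IZ := by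
    intro i j p
    induction p with
    | nil => intro hi l hl; simp at hl; rwa [hl]
    | @cons i b j h q ih =>
      intro hi l hl
      rw [SimpleGraph.Walk.support_cons, List.mem_cons] at hl
      rcases hl with rfl | hl
      · exact hi
      · exact ih (hHmem h).2 l hl
  -- distance bound along a walk with nodup support
  have bound : ∀ {i j : Fin k} (p : H.Walk i j), p.support.Nodup →
      dist (cHat i) (cHat j) ≤ (∑ l ∈ p.support.toFinset, 2 * rHat l) - rHat i - rHat j := by
    intro i j p
    induction p with
    | nil =>
      intro _
      simp [dist_self]
      linarith [hrHat i]
    | @cons i b j h q ih =>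
      intro hnd
      rw [SimpleGraph.Walk.support_cons, List.nodup_cons] at hnd
      obtain ⟨hib, hndq⟩ := hnd
      have hibF : i ∉ q.support.toFinset := by simpa using hib
      have hsum : (SimpleGraph.Walk.cons h q).support.toFinset
          = insert i q.support.toFinset := by
        rw [SimpleGraph.Walk.support_cons]; simp
      rw [hsum, Finset.sum_insert hibF]
      have hd1 := hHdist h
      have hd2 := ih hndq
      calc dist (cHat i) (cHat j) ≤ dist (cHat i) (cHat b) + dist (cHat b) (cHat j) :=
            dist_triangle _ _ _
        _ ≤ (rHat i + rHat b) + ((∑ l ∈ q.support.toFinset, 2 * rHat l) - rHat b - rHat j) :=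
            add_le_add hd1 hd2
        _ ≤ 2 * rHat i + (∑ l ∈ q.support.toFinset, 2 * rHat l) - rHat i - rHat j := by
            linarith
  -- assemble
  have hc₀ : cHat i₀ ∈ Z.supp := (hIZ i₀).mp hi₀
  have hreachG : (accessGraph cHat rHat).Reachable (cHat i₀) v := by
    rw [SimpleGraph.ConnectedComponent.mem_supp_iff] at hc₀ hv
    exact SimpleGraph.ConnectedComponent.exact (hc₀.trans hv.symm)
  have hc₀' : cHat i₀ ∈ Z.supp := (hIZ i₀).mp hi₀
  obtain ⟨w⟩ := hreachG
  have hg₀ : g (cHat i₀) ∈ IZ := hgZ _ hc₀'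
  have hr1 : H.Reachable i₀ (g (cHat i₀)) := by
    refine hHreach hi₀ hg₀ ?_
    have := hgd (cHat i₀)
    have := hrHat i₀
    linarith
  have hr2 : H.Reachable (g (cHat i₀)) (g v) := key w hc₀'
  obtain ⟨w'⟩ := hr1.trans hr2
  set p := w'.toPath with hp
  have hnd : (p : H.Walk i₀ (g v)).support.Nodup := p.2.support_nodup
  have hbd := bound (p : H.Walk i₀ (g v)) hnd
  have hsub : (p : H.Walk i₀ (g v)).support.toFinset ⊆ IZ := by
    intro l hl
    rw [List.mem_toFinset] at hl
    exact hsupp _ hi₀ l hl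
  have hsum_le : (∑ l ∈ (p : H.Walk i₀ (g v)).support.toFinset, 2 * rHat l)
      ≤ ∑ i ∈ IZ, 2 * rHat i :=
    Finset.sum_le_sum_of_subset_of_nonneg hsub (fun i _ _ => by linarith [hrHat i])
  have hgv : dist v (cHat (g v)) ≤ rHat (g v) := hgd v
  have hcomm : dist (cHat (g v)) v = dist v (cHat (g v)) := dist_comm _ _
  calc dist (cHat i₀) v ≤ dist (cHat i₀) (cHat (g v)) + dist (cHat (g v)) v :=
        dist_triangle _ _ _
    _ ≤ (∑ i ∈ IZ, 2 * rHat i) - rHat i₀ := by linarith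
end

section
/- Let (P,d) be a finite metric space, let k ≥ 1, let ĉ₁, …, ĉ_k ∈ P be points with radii r̂₁, …, r̂_k ≥ 0 such that every point of P lies in some ball B(ĉ_i, r̂_i), and let G be the associated access graph on vertex set P. For each connected component Z of G, choose a center ĉ_Z ∈ {ĉ₁,…,ĉ_k} ∩ Z whose radius is maximal among the centers belonging to Z. Then the clustering that assigns every point of a component Z to the center ĉ_Z has min-sum-radii cost Σ_{Z ∈ CC(G)} max_{v ∈ Z} d(ĉ_Z, v) ≤ (2 − 1/k) · Σ_{j=1}^k r̂_j, where CC(G) denotes the set of connected components of G. -/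
/-!
Call two centers neighbours (`ballGraph`) when their balls share a point of `P`. Along a path of
neighbours `i₀, …, iₘ` the triangle inequality gives `d(c i₀, c iₘ) ≤ 2 ∑ⱼ r iⱼ - r i₀ - r iₘ`,
and a walk in the access graph can be shadowed by such a path through centers of its own
component. Hence every point of a component `Z` is within `2 ∑_{c i ∈ Z} r i - r (sel Z)` of the
chosen center, and summing over components gives `2 ∑ᵢ r i - ∑_Z r (sel Z)`. Finally
`∑_Z r (sel Z)` is at least the largest radius, which is at least the average `(∑ᵢ r i) / k`.
-/

open Metric Finset
open SimpleGraph (Walk Reachable ConnectedComponent)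

def ballGraph {P : Type*} [MetricSpace P] {k : ℕ} (c : Fin k → P) (r : Fin k → ℝ) :
    SimpleGraph (Fin k) where
  Adj i j := i ≠ j ∧ (closedBall (c i) (r i) ∩ closedBall (c j) (r j)).Nonempty
  symm := ⟨fun _ _ h => ⟨h.1.symm, by rw [Set.inter_comm]; exact h.2⟩⟩
  loopless := ⟨fun _ h => h.1 rfl⟩

namespace ballGraph

variable {P : Type*} [MetricSpace P] {k : ℕ} {c : Fin k → P} {r : Fin k → ℝ}

lemma reachable_of_mem_closedBall {x : P} {i j : Fin k} (hi : x ∈ closedBall (c i) (r i))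
    (hj : x ∈ closedBall (c j) (r j)) : (ballGraph c r).Reachable i j := by
  by_cases hij : i = j
  · exact hij ▸ Reachable.refl i
  · exact SimpleGraph.Adj.reachable ⟨hij, x, hi, hj⟩

lemma dist_le_of_adj {i j : Fin k} (h : (ballGraph c r).Adj i j) :
    dist (c i) (c j) ≤ r i + r j := by
  obtain ⟨-, x, hi, hj⟩ := h
  calc dist (c i) (c j) ≤ dist x (c i) + dist x (c j) := dist_triangle_left _ _ _
    _ ≤ r i + r j := add_le_add hi hj

lemma dist_le_of_walk {i j : Fin k} (W : (ballGraph c r).Walk i j) :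
    dist (c i) (c j) ≤ 2 * (W.support.map r).sum - r i - r j := by
  induction W with
  | nil =>
    simp only [dist_self, Walk.support_nil, List.map_cons, List.map_nil, List.sum_singleton]
    linarith
  | @cons i l j h W ih =>
    have := dist_le_of_adj h
    have := dist_triangle (c i) (c l) (c j)
    simp only [Walk.support_cons, List.map_cons, List.sum_cons]
    linarith

open scoped Classical in
lemma dist_le_of_reachable (hr : ∀ i, 0 ≤ r i) {i j : Fin k}
    (h : (ballGraph c r).Reachable i j) :
    dist (c i) (c j) ≤ 2 * ∑ l with (ballGraph c r).Reachable i l, r l - r i - r j := by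
  -- A path visits every center at most once, so its radii sum to at most those of the component.
  obtain ⟨W, hW⟩ := h.exists_isPath
  have hsum : (W.support.map r).sum ≤ ∑ l with (ballGraph c r).Reachable i l, r l := by
    rw [← List.sum_toFinset r hW.support_nodup]
    refine sum_le_sum_of_subset_of_nonneg (fun l hl => ?_) fun l _ _ => hr l
    simpa using (W.takeUntil l (List.mem_toFinset.mp hl)).reachable
  linarith [dist_le_of_walk W]

end ballGraph

namespace accessGraph

variable {P : Type*} [MetricSpace P] {k : ℕ} {c : Fin k → P} {r : Fin k → ℝ}

lemma reachable_of_mem_closedBall {x : P} {i : Fin k} (hx : x ∈ closedBall (c i) (r i)) :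
    (accessGraph c r).Reachable (c i) x := by
  by_cases h : c i = x
  · exact h ▸ Reachable.refl _
  · exact SimpleGraph.Adj.reachable ⟨h, Or.inl ⟨i, rfl, by rwa [dist_comm]⟩⟩

lemma exists_mem_closedBall_of_adj (hr : ∀ i, 0 ≤ r i) {x y : P}
    (h : (accessGraph c r).Adj x y) :
    ∃ i, x ∈ closedBall (c i) (r i) ∧ y ∈ closedBall (c i) (r i) := by
  obtain ⟨-, ⟨i, rfl, hd⟩ | ⟨i, rfl, hd⟩⟩ := h
  · exact ⟨i, mem_closedBall_self (hr i), by rwa [mem_closedBall, dist_comm]⟩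
  · exact ⟨i, by rwa [mem_closedBall, dist_comm], mem_closedBall_self (hr i)⟩

lemma reachable_of_ballGraph_reachable {i j : Fin k} (h : (ballGraph c r).Reachable i j) :
    (accessGraph c r).Reachable (c i) (c j) := by
  obtain ⟨W⟩ := h
  induction W with
  | nil => rfl
  | cons hadj _ ih =>
    obtain ⟨-, x, hi, hl⟩ := hadj
    exact ((reachable_of_mem_closedBall hi).trans (reachable_of_mem_closedBall hl).symm).trans ih

lemma ballGraph_reachable_of_reachable (hr : ∀ i, 0 ≤ r i) {x y : P}
    (h : (accessGraph c r).Reachable x y) {i j : Fin k} (hi : x ∈ closedBall (c i) (r i))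
    (hj : y ∈ closedBall (c j) (r j)) : (ballGraph c r).Reachable i j := by
  obtain ⟨w⟩ := h
  induction w generalizing i with
  | nil => exact ballGraph.reachable_of_mem_closedBall hi hj
  | cons hxz _ ih =>
    obtain ⟨l, hxl, hzl⟩ := exists_mem_closedBall_of_adj hr hxz
    exact (ballGraph.reachable_of_mem_closedBall hi hxl).trans (ih hzl hj)

variable (c r) in
open scoped Classical in
noncomputable def componentRadius (Z : (accessGraph c r).ConnectedComponent) : ℝ :=
  ∑ i with c i ∈ Z.supp, r i

lemma sum_componentRadius [Fintype (accessGraph c r).ConnectedComponent] :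
    ∑ Z, componentRadius c r Z = ∑ i, r i := by
  classical
  simpa only [componentRadius, ConnectedComponent.mem_supp_iff] using
    sum_fiberwise univ (fun i => (accessGraph c r).connectedComponentMk (c i)) r

lemma dist_le_of_mem_supp (hr : ∀ i, 0 ≤ r i)
    (hcov : ∀ p : P, ∃ i, dist p (c i) ≤ r i) {Z : (accessGraph c r).ConnectedComponent}
    {s : Fin k} (hs : c s ∈ Z.supp) {v : P} (hv : v ∈ Z.supp) :
    dist (c s) v ≤ 2 * componentRadius c r Z - r s := by
  obtain ⟨m, hm⟩ := hcov v
  have hsv : (accessGraph c r).Reachable (c s) v := ConnectedComponent.exact (hs.trans hv.symm)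
  have hsm := ballGraph_reachable_of_reachable hr hsv (mem_closedBall_self (hr s)) hm
  classical
  have hcomp : ∑ l with (ballGraph c r).Reachable s l, r l ≤ componentRadius c r Z := by
    refine sum_le_sum_of_subset_of_nonneg (fun l hl => ?_) fun l _ _ => hr l
    simp only [mem_filter, mem_univ, true_and] at hl ⊢
    exact (ConnectedComponent.sound (reachable_of_ballGraph_reachable hl)).symm.trans hs
  calc dist (c s) v ≤ dist (c s) (c m) + dist v (c m) := dist_triangle_right _ _ _
    _ ≤ 2 * componentRadius c r Z - r s := by
      linarith [ballGraph.dist_le_of_reachable hr hsm]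

lemma sSup_dist_le (hr : ∀ i, 0 ≤ r i) (hcov : ∀ p : P, ∃ i, dist p (c i) ≤ r i)
    {Z : (accessGraph c r).ConnectedComponent} {s : Fin k} (hs : c s ∈ Z.supp) :
    sSup {x | ∃ v ∈ Z.supp, x = dist (c s) v} ≤ 2 * componentRadius c r Z - r s := by
  refine Real.sSup_le (fun _ ⟨v, hv, hx⟩ => hx ▸ dist_le_of_mem_supp hr hcov hs hv) ?_
  have : r s ≤ componentRadius c r Z :=
    single_le_sum (fun i _ => hr i) (by simpa using hs)
  linarith [hr s]

end accessGraph

lemma sum_div_card_le_sum_comp_sel {ι κ : Type*} [Fintype ι] [Fintype κ] {r : ι → ℝ}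
    (hr : ∀ i, 0 ≤ r i) (g : ι → κ) (sel : κ → ι) (hsel : ∀ i, r i ≤ r (sel (g i))) :
    (∑ i, r i) / Fintype.card ι ≤ ∑ j, r (sel j) := by
  refine div_le_of_le_mul₀ (Nat.cast_nonneg _) (sum_nonneg fun j _ => hr _) ?_
  calc ∑ i, r i ≤ ∑ _i : ι, ∑ j, r (sel j) :=
        sum_le_sum fun i _ => (hsel i).trans (single_le_sum (fun j _ => hr (sel j)) (mem_univ _))
    _ = (∑ j, r (sel j)) * Fintype.card ι := by rw [sum_const, nsmul_eq_mul, mul_comm, card_univ]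

theorem stmt9_general {P : Type*} [Fintype P] [MetricSpace P] (k : ℕ)
    (cHat : Fin k → P) (rHat : Fin k → ℝ) (hrHat : ∀ i, 0 ≤ rHat i)
    (hcov : ∀ p : P, ∃ i, dist p (cHat i) ≤ rHat i)
    (sel : (accessGraph cHat rHat).ConnectedComponent → Fin k)
    (hsel : ∀ Z, cHat (sel Z) ∈ Z.supp)
    (hselmax : ∀ Z, ∀ i : Fin k, cHat i ∈ Z.supp → rHat i ≤ rHat (sel Z)) :
    ∑ᶠ Z : (accessGraph cHat rHat).ConnectedComponent,
        sSup {x | ∃ v ∈ Z.supp, x = dist (cHat (sel Z)) v} ≤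
      (2 - 1 / (k : ℝ)) * ∑ i : Fin k, rHat i := by
  have : Fintype (accessGraph cHat rHat).ConnectedComponent := Fintype.ofFinite _
  have hsel_avg : (∑ i, rHat i) / k ≤ ∑ Z, rHat (sel Z) := by
    simpa using sum_div_card_le_sum_comp_sel hrHat
      (fun i => (accessGraph cHat rHat).connectedComponentMk (cHat i)) sel fun i => hselmax _ i rfl
  rw [finsum_eq_sum_of_fintype]
  calc ∑ Z, sSup {x | ∃ v ∈ Z.supp, x = dist (cHat (sel Z)) v}
      ≤ ∑ Z, (2 * accessGraph.componentRadius cHat rHat Z - rHat (sel Z)) :=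
        sum_le_sum fun Z _ => accessGraph.sSup_dist_le hrHat hcov (hsel Z)
    _ = 2 * ∑ i, rHat i - ∑ Z, rHat (sel Z) := by
        rw [sum_sub_distrib, ← mul_sum, accessGraph.sum_componentRadius]
    _ ≤ (2 - 1 / (k : ℝ)) * ∑ i, rHat i := by rw [sub_mul, one_div_mul_eq_div]; linarith

/-- suppose every point of the finite metric space `P` lies in one of the
`k ≥ 1` balls `B(cHat i, rHat i)`, and for every connected component `Z` of the access
graph choose (via `sel`) a center belonging to `Z` of maximal radius among the centers in
`Z`.  Then the clustering assigning every point of a component `Z` to the chosen center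
has min-sum-radii cost `∑_Z max_{v ∈ Z} d(cHat (sel Z), v) ≤ (2 − 1/k)·∑_i rHat i`. -/
theorem stmt9 {P : Type*} [Fintype P] [MetricSpace P] (k : ℕ) (hk : 1 ≤ k)
    (cHat : Fin k → P) (rHat : Fin k → ℝ) (hrHat : ∀ i, 0 ≤ rHat i)
    (hcov : ∀ p : P, ∃ i, dist p (cHat i) ≤ rHat i)
    (sel : (accessGraph cHat rHat).ConnectedComponent → Fin k)
    (hsel : ∀ Z, cHat (sel Z) ∈ Z.supp)
    (hselmax : ∀ Z, ∀ i : Fin k, cHat i ∈ Z.supp → rHat i ≤ rHat (sel Z)) :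
    ∑ᶠ Z : (accessGraph cHat rHat).ConnectedComponent,
        sSup {x | ∃ v ∈ Z.supp, x = dist (cHat (sel Z)) v} ≤
      (2 - 1 / (k : ℝ)) * ∑ i : Fin k, rHat i :=
  stmt9_general k cHat rHat hrHat hcov sel hsel hselmax
end

section
/- Let (P,d) be a finite metric space partitioned into two color classes Γ₁ and Γ₂. Let C₁, …, C_m be a partition of P such that |C_j ∩ Γ₁| = |C_j ∩ Γ₂| for every j ≤ m, and let ĉ₁, …, ĉ_k ∈ P with radii r̂₁, …, r̂_k ≥ 0 be such that for every j ≤ m there exists ℓ ≤ k with C_j ⊆ B(ĉ_ℓ, r̂_ℓ). Define the bipartite graph H on vertex set P in which p₁ ∈ Γ₁ and p₂ ∈ Γ₂ are adjacent if and only if there exists ℓ ≤ k with d(p₁, ĉ_ℓ) ≤ r̂_ℓ and d(p₂, ĉ_ℓ) ≤ r̂_ℓ. Then H has a perfect matching, i.e., P can be partitioned into pairs {p₁, p₂} with p₁ ∈ Γ₁, p₂ ∈ Γ₂ such that both points of each pair lie in a common ball B(ĉ_ℓ, r̂_ℓ). -/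
/-- let the finite metric space `P` be partitioned into two color classes
`Γ₁` and `Γ₂`, let `C₁, …, C_m` be a partition of `P` with `|C_j ∩ Γ₁| = |C_j ∩ Γ₂|` for
every `j`, and suppose each part `C_j` is contained in some ball `B(cHat ℓ, rHat ℓ)`.
Then the bipartite graph `H` on `P` joining `p₁ ∈ Γ₁` and `p₂ ∈ Γ₂` iff they lie in a
common ball `B(cHat ℓ, rHat ℓ)` has a perfect matching: there is a bijection
`f : Γ₁ → Γ₂` such that every pair `{p, f p}` lies in a common ball. -/
theorem stmt13 {P : Type*} [Fintype P] [MetricSpace P] [DecidableEq P]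
    (Γ₁ Γ₂ : Finset P) (hpart : Γ₁ ∪ Γ₂ = Finset.univ) (hΓdisj : Disjoint Γ₁ Γ₂)
    (m k : ℕ) (C : Fin m → Finset P)
    (hdisj : ∀ j j' : Fin m, j ≠ j' → Disjoint (C j) (C j'))
    (hcover : ∀ p : P, ∃ j, p ∈ C j)
    (hfair : ∀ j, (C j ∩ Γ₁).card = (C j ∩ Γ₂).card)
    (cHat : Fin k → P) (rHat : Fin k → ℝ) (hrHat : ∀ i, 0 ≤ rHat i)
    (hball : ∀ j, ∃ i, ∀ p ∈ C j, dist p (cHat i) ≤ rHat i) :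
    ∃ f : {p // p ∈ Γ₁} → {p // p ∈ Γ₂}, Function.Bijective f ∧
      ∀ p : {p // p ∈ Γ₁},
        ∃ i, dist (p : P) (cHat i) ≤ rHat i ∧ dist ((f p : P)) (cHat i) ≤ rHat i := by
  classical
  set ix : P → Fin m := fun p => (hcover p).choose with hixdef
  have hmem : ∀ p, p ∈ C (ix p) := fun p => (hcover p).choose_spec
  have huniq : ∀ p j, p ∈ C j → ix p = j := by
    intro p j hp
    by_contra h
    exact Finset.disjoint_left.mp (hdisj _ _ h) (hmem p) hp
  have e : ∀ j, {x // x ∈ C j ∩ Γ₁} ≃ {x // x ∈ C j ∩ Γ₂} :=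
    fun j => Finset.equivOfCardEq (hfair j)
  have cast_e : ∀ {j j' : Fin m}, j = j' → ∀ (p : P) (hp : p ∈ C j ∩ Γ₁)
      (hp' : p ∈ C j' ∩ Γ₁), ((e j ⟨p, hp⟩ : P)) = ((e j' ⟨p, hp'⟩ : P)) := by
    rintro j _ rfl p hp hp'
    rfl
  have hmem1 : ∀ p : {p // p ∈ Γ₁}, (p : P) ∈ C (ix (p : P)) ∩ Γ₁ := fun p =>
    Finset.mem_inter.2 ⟨hmem _, p.2⟩
  refine ⟨fun p => ⟨(e (ix (p : P)) ⟨(p : P), hmem1 p⟩ : P),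
      (Finset.mem_inter.1 (e (ix (p : P)) ⟨(p : P), hmem1 p⟩).2).2⟩, ⟨?_, ?_⟩, ?_⟩
  · -- injective
    rintro ⟨p, hp⟩ ⟨p', hp'⟩ hpp'
    have hval : ((e (ix p) ⟨p, Finset.mem_inter.2 ⟨hmem p, hp⟩⟩ : P)) =
        ((e (ix p') ⟨p', Finset.mem_inter.2 ⟨hmem p', hp'⟩⟩ : P)) :=
      congrArg Subtype.val hpp'
    have h1 : ((e (ix p) ⟨p, Finset.mem_inter.2 ⟨hmem p, hp⟩⟩ : P)) ∈ C (ix p) :=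
      (Finset.mem_inter.1 (e (ix p) ⟨p, Finset.mem_inter.2 ⟨hmem p, hp⟩⟩).2).1
    have h2 : ((e (ix p') ⟨p', Finset.mem_inter.2 ⟨hmem p', hp'⟩⟩ : P)) ∈ C (ix p') :=
      (Finset.mem_inter.1 (e (ix p') ⟨p', Finset.mem_inter.2 ⟨hmem p', hp'⟩⟩).2).1
    have hj : ix p = ix p' := by
      rw [← huniq _ _ h1, hval, huniq _ _ h2]
    have hp'mem : p' ∈ C (ix p) ∩ Γ₁ := by
      rw [hj]; exact Finset.mem_inter.2 ⟨hmem p', hp'⟩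
    have hval2 : ((e (ix p) ⟨p, Finset.mem_inter.2 ⟨hmem p, hp⟩⟩ : P)) =
        ((e (ix p) ⟨p', hp'mem⟩ : P)) :=
      hval.trans (cast_e hj.symm p' _ _)
    have : (⟨p, Finset.mem_inter.2 ⟨hmem p, hp⟩⟩ : {x // x ∈ C (ix p) ∩ Γ₁}) =
        ⟨p', hp'mem⟩ := (e (ix p)).injective (Subtype.ext hval2)
    exact Subtype.ext (show p = p' from congrArg Subtype.val this)
  · -- surjective
    rintro ⟨q, hq⟩
    have hq2 : q ∈ C (ix q) ∩ Γ₂ := Finset.mem_inter.2 ⟨hmem _, hq⟩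
    set x := (e (ix q)).symm ⟨q, hq2⟩ with hxdef
    have hx : (x : P) ∈ C (ix q) ∩ Γ₁ := x.2
    refine ⟨⟨(x : P), (Finset.mem_inter.1 hx).2⟩, Subtype.ext ?_⟩
    have hjx : ix (x : P) = ix q := huniq _ _ (Finset.mem_inter.1 hx).1
    show ((e (ix (x : P)) ⟨(x : P), _⟩ : P)) = q
    have step1 := cast_e hjx (x : P)
      (hmem1 ⟨(x : P), (Finset.mem_inter.1 hx).2⟩) hx
    rw [step1]
    have : e (ix q) ⟨(x : P), hx⟩ = ⟨q, hq2⟩ := (e (ix q)).apply_symm_apply _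
    exact congrArg Subtype.val this
  · -- ball condition
    intro p
    obtain ⟨i, hi⟩ := hball (ix (p : P))
    exact ⟨i, hi _ (hmem _),
      hi _ (Finset.mem_inter.1 (e (ix (p : P)) ⟨(p : P), hmem1 p⟩).2).1⟩
end

section
/- Let (P,d) be a finite metric space, let L ∈ ℕ, and let C₁, …, C_k be a partition of P with |C_j| ≥ L for every j ≤ k. Let ĉ₁, …, ĉ_m ∈ P with radii r̂₁, …, r̂_m ≥ 0, and suppose there is a surjective map φ: {1,…,k} → {1,…,m} such that C_j ⊆ B(ĉ_{φ(j)}, r̂_{φ(j)}) for every j ≤ k. Then there exists an assignment f: P → {ĉ₁, …, ĉ_m} such that d(p, ĉ_i) ≤ r̂_i whenever f(p) = ĉ_i, and |f⁻¹(ĉ_i)| ≥ L for every i ≤ m. -/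
/-- let `C₁, …, C_k` be a partition of the finite metric space `P` with
`|C_j| ≥ L` for every `j`, let `cHat₁, …, cHat_m` be centers with nonnegative radii
`rHat₁, …, rHat_m`, and let `φ : {1,…,k} → {1,…,m}` be surjective with
`C_j ⊆ B(cHat (φ j), rHat (φ j))` for every `j`.  Then there is an assignment
`f : P → {cHat₁, …, cHat_m}` (given by the index map `f : P → Fin m`) such that every
point is within the radius of its assigned center and every center receives at least `L`
points. -/
theorem stmt14 {P : Type*} [Fintype P] [MetricSpace P] (L k m : ℕ)
    (C : Fin k → Finset P)
    (hdisj : ∀ j j' : Fin k, j ≠ j' → Disjoint (C j) (C j'))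
    (hcover : ∀ p : P, ∃ j, p ∈ C j)
    (hL : ∀ j, L ≤ (C j).card)
    (cHat : Fin m → P) (rHat : Fin m → ℝ) (hrHat : ∀ i, 0 ≤ rHat i)
    (φ : Fin k → Fin m) (hsurj : Function.Surjective φ)
    (hball : ∀ j, ∀ p ∈ C j, dist p (cHat (φ j)) ≤ rHat (φ j)) :
    ∃ f : P → Fin m, (∀ p, dist p (cHat (f p)) ≤ rHat (f p)) ∧
      ∀ i : Fin m, L ≤ (Finset.univ.filter fun p => f p = i).card := by
  -- assign each point to the cluster containing it
  have hg : ∀ p : P, ∃ j, p ∈ C j := hcover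
  set g : P → Fin k := fun p => (hg p).choose with hgdef
  have hgmem : ∀ p, p ∈ C (g p) := fun p => (hg p).choose_spec
  have hguniq : ∀ p : P, ∀ j, p ∈ C j → g p = j := by
    intro p j hp
    by_contra h
    exact Finset.disjoint_left.mp (hdisj _ _ h) (hgmem p) hp
  refine ⟨fun p => φ (g p), fun p => hball _ _ (hgmem p), fun i => ?_⟩
  obtain ⟨j, rfl⟩ := hsurj i
  calc L ≤ (C j).card := hL j
    _ ≤ _ := by
        apply Finset.card_le_card
        intro p hp
        simp only [Finset.mem_filter, Finset.mem_univ, true_and]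
        rw [hguniq p j hp]
end
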